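/- arXiv:1905.09212 — 4 statements merged into one kernel-verified Lean document; each statement's English description precedes it below -/
import Mathlib

section
/- Let p be a prime, α a positive integer, and n = p^r · n₀ with r a nonnegative integer and n₀ an integer not divisible by p. Then: C(p^α, p^r n₀) = p^⌊α/2⌋ if r ≥ α; C(p^α, p^r n₀) = p^{r/2} · C(p^{α−r}, n₀) if r < α and r is even; and C(p^α, p^r n₀) = 0 if r < α and r is odd. -/
/-- `C m n` is the number of residues `x` modulo `m` with `x² ≡ n (mod m)`. -/
noncomputable def C (m : ℕ) (n : ℤ) : ℕ := Nat.card {x : ZMod m // x ^ 2 = (n : ZMod m)}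

/-!
Solutions are counted through their representatives `x < m` in `ℕ`. If `p ^ α ∣ p ^ r n₀` the
congruence is `x² ≡ 0`, whose solutions are the multiples of `p ^ ⌈α/2⌉`. Otherwise every solution
has `p ^ r ∣ x²`, hence `p ^ ⌈r/2⌉ ∣ x`. For odd `r` this gives `p ^ (r+1) ∣ x²`, which forces
`p ∣ n₀`. For `r = 2s` the substitution `x = p ^ s y` turns the congruence into
`y² ≡ n₀ (mod p ^ (α - r))`, with `y < p ^ (α - s)` running over `p ^ s` full periods.
-/

open Finset

theorem Nat.Prime.pow_dvd_sq_iff {p : ℕ} (hp : p.Prime) {a x : ℕ} :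
    p ^ a ∣ x ^ 2 ↔ p ^ ((a + 1) / 2) ∣ x := by
  rcases eq_or_ne x 0 with rfl | hx
  · simp
  rw [hp.pow_dvd_iff_le_factorization (pow_ne_zero 2 hx), hp.pow_dvd_iff_le_factorization hx,
    Nat.factorization_pow, Finsupp.smul_apply, smul_eq_mul]
  omega

theorem Nat.count_mul_of_periodic {P : ℕ → Prop} [DecidablePred P] {m : ℕ}
    (hP : Function.Periodic P m) (k : ℕ) : count P (m * k) = k * count P m := by
  induction k with
  | zero => simp
  | succ k ih =>
    have hshift : (fun j => P (m * k + j)) = P := funext fun j => by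
      rw [add_comm, mul_comm]; exact hP.nat_mul k j
    rw [Nat.mul_succ, count_add, ih]
    simp only [hshift, Nat.succ_mul]

theorem Nat.count_dvd_and_div {d : ℕ} (hd : 0 < d) (Q : ℕ → Prop) [DecidablePred Q] (N : ℕ) :
    count (fun x => d ∣ x ∧ Q (x / d)) (d * N) = count Q N := by
  have himage : {x ∈ range (d * N) | d ∣ x ∧ Q (x / d)} = {y ∈ range N | Q y}.image (d * ·) := by
    ext x
    simp only [mem_filter, mem_range, mem_image]
    constructor
    · rintro ⟨hx, ⟨y, rfl⟩, hy⟩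
      rw [Nat.mul_div_cancel_left _ hd] at hy
      exact ⟨y, ⟨Nat.lt_of_mul_lt_mul_left hx, hy⟩, rfl⟩
    · rintro ⟨y, ⟨hy, hQ⟩, rfl⟩
      refine ⟨Nat.mul_lt_mul_of_pos_left hy hd, dvd_mul_right d y, ?_⟩
      rwa [Nat.mul_div_cancel_left _ hd]
  rw [count_eq_card_filter_range, count_eq_card_filter_range, himage,
    Finset.card_image_of_injective _ (mul_right_injective₀ hd.ne')]

theorem C_eq_count (m : ℕ) [NeZero m] (n : ℤ) :
    C m n = Nat.count (fun x : ℕ => (m : ℤ) ∣ (x : ℤ) ^ 2 - n) m := by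
  rw [C, Nat.card_eq_fintype_card, Fintype.card_subtype, Nat.count_eq_card_filter_range,
    ← Finset.card_image_of_injective _ (ZMod.val_injective m)]
  congr 1
  ext k
  simp only [mem_image, mem_filter, mem_univ, true_and, mem_range]
  constructor
  · rintro ⟨x, hx, rfl⟩
    refine ⟨ZMod.val_lt x, ?_⟩
    rw [← ZMod.intCast_zmod_eq_zero_iff_dvd]
    push_cast
    simp [hx]
  · rintro ⟨hk, hdvd⟩
    refine ⟨k, ?_, ZMod.val_natCast_of_lt hk⟩
    rw [← ZMod.intCast_zmod_eq_zero_iff_dvd] at hdvd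
    push_cast at hdvd
    exact sub_eq_zero.mp hdvd

theorem periodic_dvd_sq_sub (m : ℕ) (n : ℤ) :
    Function.Periodic (fun x : ℕ => (m : ℤ) ∣ (x : ℤ) ^ 2 - n) m := by
  intro x
  have hshift : ((x + m : ℕ) : ℤ) ^ 2 - n = (x ^ 2 - n) + m * (2 * x + m) := by push_cast; ring
  simp only [hshift, dvd_add_left (dvd_mul_right _ _)]

theorem C_eq_C_zero_of_dvd (m : ℕ) {n : ℤ} (h : (m : ℤ) ∣ n) : C m n = C m 0 := by
  simp [C, (ZMod.intCast_zmod_eq_zero_iff_dvd n m).mpr h]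

theorem C_prime_pow_zero {p : ℕ} (hp : p.Prime) (α : ℕ) : C (p ^ α) 0 = p ^ (α / 2) := by
  have : NeZero (p ^ α) := ⟨pow_ne_zero _ hp.ne_zero⟩
  have hpred : (fun x : ℕ => ((p ^ α : ℕ) : ℤ) ∣ (x : ℤ) ^ 2 - (0 : ℤ)) =
      fun x => p ^ ((α + 1) / 2) ∣ x ∧ True := by
    funext x
    rw [sub_zero, and_true, ← hp.pow_dvd_sq_iff]
    norm_cast
  have hsplit : p ^ α = p ^ ((α + 1) / 2) * p ^ (α / 2) := by rw [← pow_add]; congr 1; omega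
  rw [C_eq_count]
  simp only [hpred]
  rw [hsplit, Nat.count_dvd_and_div (pow_pos hp.pos _) (fun _ => True), Nat.count_true]

theorem dvd_sq_sub_pow_mul_iff {p : ℕ} (hp : p.Prime) (s m : ℕ) (n : ℤ) (x : ℕ) :
    (p : ℤ) ^ (2 * s + m) ∣ (x : ℤ) ^ 2 - p ^ (2 * s) * n ↔
      p ^ s ∣ x ∧ (p : ℤ) ^ m ∣ ((x / p ^ s : ℕ) : ℤ) ^ 2 - n := by
  have hscale : ∀ y : ℕ, (p : ℤ) ^ (2 * s + m) ∣ ((p ^ s * y : ℕ) : ℤ) ^ 2 - p ^ (2 * s) * n ↔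
      (p : ℤ) ^ m ∣ (y : ℤ) ^ 2 - n := fun y => by
    rw [show ((p ^ s * y : ℕ) : ℤ) ^ 2 - p ^ (2 * s) * n = p ^ (2 * s) * (y ^ 2 - n) by
      push_cast; ring, pow_add, mul_dvd_mul_iff_left (pow_ne_zero _ (by exact_mod_cast hp.ne_zero))]
  have hps : 0 < p ^ s := pow_pos hp.pos s
  constructor
  · intro h
    have hsq : (p : ℤ) ^ (2 * s) ∣ (x : ℤ) ^ 2 := by
      simpa using dvd_add ((pow_dvd_pow _ (Nat.le_add_right _ m)).trans h)
        (dvd_mul_right ((p : ℤ) ^ (2 * s)) n)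
    obtain ⟨y, rfl⟩ : p ^ s ∣ x := by
      have := (hp.pow_dvd_sq_iff (a := 2 * s) (x := x)).mp (by exact_mod_cast hsq)
      rwa [show (2 * s + 1) / 2 = s by omega] at this
    rw [hscale] at h
    exact ⟨dvd_mul_right _ _, by rwa [Nat.mul_div_cancel_left _ hps]⟩
  · rintro ⟨⟨y, rfl⟩, h⟩
    rw [hscale]
    rwa [Nat.mul_div_cancel_left _ hps] at h

theorem C_prime_pow_pow_mul_of_even {p : ℕ} (hp : p.Prime) {α r : ℕ} (hrα : r ≤ α)
    (hr : Even r) (n : ℤ) : C (p ^ α) ((p : ℤ) ^ r * n) = p ^ (r / 2) * C (p ^ (α - r)) n := by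
  obtain ⟨s, rfl⟩ := hr.two_dvd
  obtain ⟨m, rfl⟩ := Nat.exists_eq_add_of_le hrα
  have : NeZero p := ⟨hp.ne_zero⟩
  rw [Nat.add_sub_cancel_left, Nat.mul_div_cancel_left _ two_pos, C_eq_count, C_eq_count]
  push_cast
  simp only [dvd_sq_sub_pow_mul_iff hp]
  have hperiodic : Function.Periodic (fun y : ℕ => (p : ℤ) ^ m ∣ (y : ℤ) ^ 2 - n) (p ^ m) := by
    simpa using periodic_dvd_sq_sub (p ^ m) n
  rw [show p ^ (2 * s + m) = p ^ s * (p ^ m * p ^ s) by ring,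
    Nat.count_dvd_and_div (pow_pos hp.pos s) (fun y => (p : ℤ) ^ m ∣ (y : ℤ) ^ 2 - n),
    Nat.count_mul_of_periodic hperiodic]

theorem dvd_of_pow_succ_dvd_sq_sub_pow_mul {p : ℕ} (hp : p.Prime) {r : ℕ} (hr : Odd r)
    {x : ℕ} {n : ℤ} (h : (p : ℤ) ^ (r + 1) ∣ (x : ℤ) ^ 2 - p ^ r * n) : (p : ℤ) ∣ n := by
  have hsq : p ^ r ∣ x ^ 2 := by
    have : (p : ℤ) ^ r ∣ (x : ℤ) ^ 2 := by
      simpa using dvd_add ((pow_dvd_pow _ r.le_succ).trans h) (dvd_mul_right ((p : ℤ) ^ r) n)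
    exact_mod_cast this
  have hsq' : (p : ℤ) ^ (r + 1) ∣ (x : ℤ) ^ 2 := by
    obtain ⟨t, rfl⟩ := hr
    have := pow_dvd_pow_of_dvd (hp.pow_dvd_sq_iff.mp hsq) 2
    rw [← pow_mul, show (2 * t + 1 + 1) / 2 * 2 = 2 * t + 1 + 1 by omega] at this
    exact_mod_cast this
  have : (p : ℤ) ^ r * p ∣ (p : ℤ) ^ r * n := by
    simpa [pow_succ] using (dvd_sub hsq' h)
  exact (mul_dvd_mul_iff_left (pow_ne_zero _ (by exact_mod_cast hp.ne_zero))).mp this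

theorem C_prime_pow_pow_mul_of_odd {p : ℕ} (hp : p.Prime) {α r : ℕ} (hrα : r < α)
    (hr : Odd r) {n : ℤ} (hn : ¬ (p : ℤ) ∣ n) : C (p ^ α) ((p : ℤ) ^ r * n) = 0 := by
  have : NeZero (p ^ α) := ⟨pow_ne_zero _ hp.ne_zero⟩
  rw [C_eq_count, Nat.count_iff_forall_not]
  intro x _ hx
  push_cast at hx
  exact hn (dvd_of_pow_succ_dvd_sq_sub_pow_mul hp hr ((pow_dvd_pow _ hrα).trans hx))

theorem stmt_4_general (p : ℕ) (hp : p.Prime) (α : ℕ) (r : ℕ) (n₀ : ℤ)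
    (hn₀ : ¬ (p : ℤ) ∣ n₀) :
    (α ≤ r → C (p ^ α) ((p : ℤ) ^ r * n₀) = p ^ (α / 2)) ∧
    (r < α → Even r → C (p ^ α) ((p : ℤ) ^ r * n₀) = p ^ (r / 2) * C (p ^ (α - r)) n₀) ∧
    (r < α → Odd r → C (p ^ α) ((p : ℤ) ^ r * n₀) = 0) := by
  refine ⟨fun hαr => ?_, fun hrα hr => C_prime_pow_pow_mul_of_even hp hrα.le hr n₀,
    fun hrα hr => C_prime_pow_pow_mul_of_odd hp hrα hr hn₀⟩
  have hdvd : ((p ^ α : ℕ) : ℤ) ∣ (p : ℤ) ^ r * n₀ := by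
    push_cast
    exact (pow_dvd_pow _ hαr).mul_right n₀
  rw [C_eq_C_zero_of_dvd _ hdvd, C_prime_pow_zero hp]

theorem stmt_4 (p : ℕ) (hp : p.Prime) (α : ℕ) (hα : 0 < α) (r : ℕ) (n₀ : ℤ)
    (hn₀ : ¬ (p : ℤ) ∣ n₀) :
    (α ≤ r → C (p ^ α) ((p : ℤ) ^ r * n₀) = p ^ (α / 2)) ∧
    (r < α → Even r → C (p ^ α) ((p : ℤ) ^ r * n₀) = p ^ (r / 2) * C (p ^ (α - r)) n₀) ∧
    (r < α → Odd r → C (p ^ α) ((p : ℤ) ^ r * n₀) = 0) :=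
  stmt_4_general p hp α r n₀ hn₀
end

section
/- Let n be a positive integer and s a complex number with Re(s) > 1. Then the series Z_n(s) = Σ_{m=1}^∞ C(3m, −n)/m^s converges absolutely and factors as an Euler product: Z_n(s) = (Σ_{k=0}^∞ C(3^{k+1}, −n) · 3^{−ks}) · ∏_{p prime, p ≠ 3} (Σ_{k=0}^∞ C(p^k, −n) · p^{−ks}), where the product over primes p ≠ 3 converges (is multipliable). -/
/-!
By the Chinese remainder theorem `m ↦ C m N` is multiplicative, and for `N ≠ 0` it is bounded on
prime powers by `8 |N|`: two square roots `x, y` of `N` modulo `p ^ k` satisfy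
`p ^ k ∣ (y - x) (y + x)`, the two factors differ by `2 x`, and `2 x` has `p`-adic valuation
`v_p(4N) / 2` once `k > v_p(4N)`; so `y ≡ ±x` modulo `p ^ (k - v_p(4N) / 2)`. The Euler factors of
`∑ C m N / m ^ s` are therefore `1 + O(|N| p ^ (-Re s))`, which gives absolute convergence and the
Euler product. Finally `C (3 ^ (k + 1) u) N = C (3 ^ (k + 1)) N * C u N` for `3 ∤ u` separates the
factor at `3` from the product over the primes `p ≠ 3`.
-/

open Finset

lemma C_one (N : ℤ) : C 1 N = 1 := by
  rw [C, Nat.card_eq_one_iff_unique]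
  exact ⟨inferInstance, ⟨⟨0, Subsingleton.elim _ _⟩⟩⟩

lemma C_mul {a b : ℕ} (h : a.Coprime b) (N : ℤ) : C (a * b) N = C a N * C b N := by
  rw [C, C, C, ← Nat.card_prod]
  refine Nat.card_congr <| ((ZMod.chineseRemainder h).toEquiv.subtypeEquiv fun x => ?_).trans
    (Equiv.subtypeProdEquivProd (p := fun y : ZMod a => y ^ 2 = N)
      (q := fun z : ZMod b => z ^ 2 = N))
  rw [← (ZMod.chineseRemainder h).injective.eq_iff, map_pow, map_intCast, Prod.ext_iff]
  simp

lemma cast_C_mul {a b : ℕ} (h : a.Coprime b) (N : ℤ) : (C (a * b) N : ℂ) = C a N * C b N := by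
  rw [C_mul h, Nat.cast_mul]

lemma C_le {m : ℕ} [NeZero m] (N : ℤ) : C m N ≤ m :=
  (Finite.card_subtype_le _).trans (Nat.card_zmod m).le

lemma C_eq_card_filter (m : ℕ) [NeZero m] (N : ℤ) : C m N = #{x : ZMod m | x ^ 2 = N} := by
  rw [C, Nat.card_eq_fintype_card, Fintype.card_subtype]

lemma card_filter_castHom_eq {M D : ℕ} [NeZero M] [NeZero D] (h : D ∣ M) (w : ZMod D) :
    #{z : ZMod M | ZMod.castHom h (ZMod D) z = w} = M / D := by
  set φ := ZMod.castHom h (ZMod D)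
  have hfib (b : ZMod D) : #{z | φ z = b} = #{z | φ z = w} :=
    AddMonoidHom.card_fiber_eq_of_mem_range φ (ZMod.castHom_surjective h b)
      (ZMod.castHom_surjective h w)
  have hM : M = D * #{z | φ z = w} := by
    calc M = #(univ : Finset (ZMod M)) := by simp [ZMod.card]
      _ = ∑ b : ZMod D, #{z | φ z = b} :=
        card_eq_sum_card_fiberwise (t := univ) (fun _ _ => mem_coe.mpr (mem_univ _))
      _ = D * #{z | φ z = w} := by simp [hfib, ZMod.card]
  exact (Nat.div_eq_of_eq_mul_right (Nat.pos_of_neZero D) hM).symm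

lemma C_le_of_forall_castHom_eq_or_eq_neg {M D : ℕ} [NeZero M] (h : D ∣ M) {N : ℤ} (a : ZMod D)
    (ha : ∀ y : ZMod M, y ^ 2 = N → ZMod.castHom h (ZMod D) y = a ∨
      ZMod.castHom h (ZMod D) y = -a) :
    C M N ≤ 2 * (M / D) := by
  have : NeZero D := ⟨fun h0 => NeZero.ne M (Nat.eq_zero_of_zero_dvd (h0 ▸ h))⟩
  rw [C_eq_card_filter]
  calc #{y : ZMod M | y ^ 2 = N} ≤ M / D * #({a, -a} : Finset (ZMod D)) := by
        refine card_le_mul_card_image_of_maps_to (f := ZMod.castHom h (ZMod D))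
          (fun y hy => ?_) _ fun b _ => ?_
        · simpa using ha y (mem_filter.mp hy).2
        · rw [← card_filter_castHom_eq h b, filter_filter]
          exact card_le_card (monotone_filter_right _ fun _ _ h => h.2)
    _ ≤ 2 * (M / D) := by
        rw [mul_comm]; exact Nat.mul_le_mul_right _ card_le_two

lemma pow_sub_dvd_of_pow_dvd_mul {p : ℕ} [Fact p.Prime] {k j : ℕ} {u v : ℤ}
    (h : (p : ℤ) ^ k ∣ u * v) (hv : ¬ (p : ℤ) ^ (j + 1) ∣ v) : (p : ℤ) ^ (k - j) ∣ u := by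
  rcases eq_or_ne u 0 with rfl | hu
  · exact dvd_zero _
  have hv0 : v ≠ 0 := by rintro rfl; exact hv (dvd_zero _)
  rw [padicValInt_dvd_iff] at h hv ⊢
  simp only [mul_ne_zero hu hv0, hu, hv0, false_or] at h hv ⊢
  rw [padicValInt.mul hu hv0] at h
  omega

/-- Since `(y + x) - (y - x) = 2x`, at most one of `y ± x` can absorb more than `p ^ j`. -/
lemma pow_sub_dvd_sub_or_add_of_sq_sub_sq {p : ℕ} [Fact p.Prime] {k j : ℕ} {x y : ℤ}
    (hxy : (p : ℤ) ^ k ∣ y ^ 2 - x ^ 2) (hx : ¬ (p : ℤ) ^ (j + 1) ∣ 2 * x) :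
    (p : ℤ) ^ (k - j) ∣ y - x ∨ (p : ℤ) ^ (k - j) ∣ y + x := by
  have hprod : y ^ 2 - x ^ 2 = (y - x) * (y + x) := by ring
  rw [hprod] at hxy
  by_cases hadd : (p : ℤ) ^ (j + 1) ∣ y + x
  · refine .inr (pow_sub_dvd_of_pow_dvd_mul (mul_comm (y - x) _ ▸ hxy) fun hsub => hx ?_)
    simpa [two_mul, add_sub_sub_cancel] using dvd_sub hadd hsub
  · exact .inl (pow_sub_dvd_of_pow_dvd_mul hxy hadd)

lemma not_pow_dvd_two_mul_of_sq_sub {P : ℤ} {i j k : ℕ} {N x : ℤ} (hN : ¬ P ^ i ∣ 4 * N)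
    (hik : i ≤ k) (hij : i ≤ 2 * (j + 1)) (hx : P ^ k ∣ x ^ 2 - N) : ¬ P ^ (j + 1) ∣ 2 * x := by
  intro h2x
  have hsq : P ^ i ∣ (2 * x) ^ 2 :=
    (pow_dvd_pow P (by omega : i ≤ (j + 1) * 2)).trans (pow_mul P _ 2 ▸ pow_dvd_pow_of_dvd h2x 2)
  have hdiff : P ^ i ∣ 4 * (x ^ 2 - N) := ((pow_dvd_pow P hik).trans hx).mul_left 4
  exact hN (by simpa [mul_pow, mul_sub] using dvd_sub hsq hdiff)

lemma C_prime_pow_le {p : ℕ} (hp : p.Prime) (k : ℕ) {N : ℤ} (hN : N ≠ 0) :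
    C (p ^ k) N ≤ 8 * N.natAbs := by
  have := Fact.mk hp
  have : NeZero (p ^ k) := ⟨pow_ne_zero _ hp.ne_zero⟩
  set c := padicValInt p (4 * N)
  have h4N : 4 * N ≠ 0 := mul_ne_zero (by norm_num) hN
  have hpc : p ^ c ≤ 4 * N.natAbs := by
    have := Int.natAbs_dvd_natAbs.mpr (padicValInt_dvd (p := p) (4 * N))
    simpa [Int.natAbs_mul, Int.natAbs_pow] using Nat.le_of_dvd (by positivity) this
  rcases le_or_gt k c with hk | hk
  · calc C (p ^ k) N ≤ p ^ k := C_le N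
      _ ≤ p ^ c := Nat.pow_le_pow_right hp.pos hk
      _ ≤ 8 * N.natAbs := by omega
  by_cases hsol : ∃ x : ZMod (p ^ k), x ^ 2 = N
  swap
  · have : IsEmpty {x : ZMod (p ^ k) // x ^ 2 = N} := ⟨fun x => hsol ⟨x.1, x.2⟩⟩
    simp [C]
  obtain ⟨x, hx⟩ := hsol
  obtain ⟨X, rfl⟩ := ZMod.intCast_surjective x
  have hdvd {Z : ℤ} (hZ : (Z : ZMod (p ^ k)) ^ 2 = N) : (p : ℤ) ^ k ∣ Z ^ 2 - N := by
    have := (ZMod.intCast_eq_intCast_iff_dvd_sub (Z ^ 2) N (p ^ k)).mp (by push_cast; exact hZ)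
    exact dvd_sub_comm.mp (by exact_mod_cast this)
  have hc1 : ¬ (p : ℤ) ^ (c + 1) ∣ 4 * N := by
    rw [padicValInt_dvd_iff]; simp [h4N, c]
  set j := c / 2
  have h2X : ¬ (p : ℤ) ^ (j + 1) ∣ 2 * X :=
    not_pow_dvd_two_mul_of_sq_sub hc1 hk (by omega) (hdvd hx)
  have hjk : j ≤ k := by omega
  have hD : p ^ (k - j) ∣ p ^ k := pow_dvd_pow p (Nat.sub_le k j)
  have hroots : ∀ y : ZMod (p ^ k), y ^ 2 = N → ZMod.castHom hD _ y = (X : ZMod (p ^ (k - j))) ∨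
      ZMod.castHom hD _ y = -(X : ZMod (p ^ (k - j))) := by
    intro y hy
    obtain ⟨Y, rfl⟩ := ZMod.intCast_surjective y
    rw [map_intCast, ← Int.cast_neg, ZMod.intCast_eq_intCast_iff_dvd_sub,
      ZMod.intCast_eq_intCast_iff_dvd_sub]
    push_cast
    rcases pow_sub_dvd_sub_or_add_of_sq_sub_sq
      (by simpa using dvd_sub (hdvd hy) (hdvd hx)) h2X with h | h
    · exact .inl (dvd_sub_comm.mp h)
    · exact .inr (by simpa [sub_eq_add_neg, add_comm] using h.neg_right)
  calc C (p ^ k) N ≤ 2 * (p ^ k / p ^ (k - j)) := C_le_of_forall_castHom_eq_or_eq_neg hD _ hroots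
    _ = 2 * p ^ j := by rw [Nat.pow_div (Nat.sub_le k j) hp.pos, Nat.sub_sub_self hjk]
    _ ≤ 2 * p ^ c := Nat.mul_le_mul_left 2 (Nat.pow_le_pow_right hp.pos (Nat.div_le_self c 2))
    _ ≤ 8 * N.natAbs := by omega

namespace LSeries

lemma term_mul_of_coprime {f : ℕ → ℂ} (hmul : ∀ {a b : ℕ}, a.Coprime b → f (a * b) = f a * f b)
    (s : ℂ) {a b : ℕ} (h : a.Coprime b) : term f s (a * b) = term f s a * term f s b := by
  rcases eq_or_ne a 0 with rfl | ha
  · simp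
  rcases eq_or_ne b 0 with rfl | hb
  · simp
  simp only [term_of_ne_zero (mul_ne_zero ha hb), term_of_ne_zero ha, term_of_ne_zero hb, hmul h,
    Nat.cast_mul, Complex.natCast_mul_natCast_cpow, mul_div_mul_comm]

lemma term_comp_mul (f : ℕ → ℂ) {q : ℕ} (hq : q ≠ 0) (s : ℂ) (m : ℕ) :
    term (fun m => f (q * m)) s m = (q : ℂ) ^ s * term f s (q * m) := by
  rcases eq_or_ne m 0 with rfl | hm
  · simp
  have hq' : (q : ℂ) ^ s ≠ 0 := by simp [Complex.cpow_eq_zero_iff, hq]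
  rw [term_of_ne_zero hm, term_of_ne_zero (mul_ne_zero hq hm), Nat.cast_mul,
    Complex.natCast_mul_natCast_cpow, mul_div_assoc', mul_div_mul_left _ _ hq']

lemma summable_norm_term_comp_mul {f : ℕ → ℂ} {s : ℂ} (hf : Summable (‖term f s ·‖)) {q : ℕ}
    (hq : q ≠ 0) : Summable (‖term (fun m => f (q * m)) s ·‖) := by
  simp_rw [term_comp_mul f hq, norm_mul]
  exact (hf.comp_injective (mul_right_injective₀ hq)).mul_left _

end LSeries

open LSeries

/-- Euler-product bound: every partial sum is dominated by `∏ₚ (1 + R p) ≤ exp (∑ R)`. -/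
theorem summable_of_multiplicative_of_tsum_prime_pow_le {F : ℕ → ℝ} (hF : ∀ m, 0 ≤ F m)
    (hF₀ : F 0 = 0) (hF₁ : F 1 = 1) (hmul : ∀ {a b : ℕ}, a.Coprime b → F (a * b) = F a * F b)
    (hpow : ∀ {p : ℕ}, p.Prime → Summable fun k => F (p ^ k)) {R : ℕ → ℝ} (hR₀ : ∀ p, 0 ≤ R p)
    (hR : Summable R) (hFR : ∀ {p : ℕ}, p.Prime → ∑' k, F (p ^ (k + 1)) ≤ R p) :
    Summable F := by
  refine summable_of_sum_range_le hF (c := Real.exp (∑' p, R p)) fun M => ?_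
  have hsmooth := (EulerProduct.summable_and_hasSum_smoothNumbers_prod_primesBelow_tsum hF₁ hmul
    (fun hp => by simpa only [Real.norm_of_nonneg (hF _)] using hpow hp) M).2
  have hind (m : ℕ) (hm : m ∈ range M) : F m ≤ M.smoothNumbers.indicator F m := by
    rcases eq_or_ne m 0 with rfl | hm0
    · simpa [hF₀] using Set.indicator_nonneg (fun m _ => hF m) 0
    · rw [Set.indicator_of_mem (Nat.mem_smoothNumbers_of_lt (Nat.pos_of_ne_zero hm0)
        (mem_range.mp hm))]
  have hfactor {p : ℕ} (hp : p.Prime) : ∑' k, F (p ^ k) ≤ Real.exp (R p) := by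
    rw [(hpow hp).tsum_eq_zero_add, pow_zero, hF₁, add_comm]
    exact (add_le_add_left (hFR hp) 1).trans (Real.add_one_le_exp _)
  calc ∑ m ∈ range M, F m ≤ ∑ m ∈ range M, M.smoothNumbers.indicator F m := sum_le_sum hind
    _ ≤ ∑' m, M.smoothNumbers.indicator F m :=
        (summable_subtype_iff_indicator.mp hsmooth.summable).sum_le_tsum _
          fun m _ => Set.indicator_nonneg (fun m _ => hF m) m
    _ = ∏ p ∈ M.primesBelow, ∑' k, F (p ^ k) := (_root_.tsum_subtype _ F).symm.trans hsmooth.tsum_eq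
    _ ≤ ∏ p ∈ M.primesBelow, Real.exp (R p) :=
        prod_le_prod (fun p _ => tsum_nonneg fun k => hF _)
          fun p hp => hfactor (Nat.prime_of_mem_primesBelow hp)
    _ = Real.exp (∑ p ∈ M.primesBelow, R p) := (Real.exp_sum _ _).symm
    _ ≤ Real.exp (∑' p, R p) := Real.exp_le_exp.mpr (hR.sum_le_tsum _ fun p _ => hR₀ p)

theorem eulerProduct_hasProd_primes_ne {R : Type*} [NormedCommRing R] [CompleteSpace R]
    {f : ℕ → R} (hf₁ : f 1 = 1) (hmul : ∀ {a b : ℕ}, a.Coprime b → f (a * b) = f a * f b)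
    (hsum : Summable (‖f ·‖)) (hf₀ : f 0 = 0) {q : ℕ} (hq : q.Prime) :
    HasProd (fun p : {p : ℕ // p.Prime ∧ p ≠ q} => ∑' k, f ((p : ℕ) ^ k))
      (∑' m, if m.Coprime q then f m else 0) := by
  set g : ℕ → R := fun m => if m.Coprime q then f m else 0
  have hg₁ : g 1 = 1 := by simp [g, hf₁]
  have hgmul {a b : ℕ} (h : a.Coprime b) : g (a * b) = g a * g b := by
    simp only [g, Nat.coprime_mul_iff_left, hmul h]
    split_ifs <;> simp_all
  have hgsum : Summable (‖g ·‖) :=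
    hsum.of_nonneg_of_le (fun _ => norm_nonneg _) fun m => by
      simp only [g]; split_ifs <;> simp
  have hg₀ : g 0 = 0 := by simp [g, hf₀]
  have hfactor : {p | p.Prime}.mulIndicator (fun p => ∑' k, g (p ^ k)) =
      {p | p.Prime ∧ p ≠ q}.mulIndicator (fun p => ∑' k, f (p ^ k)) := by
    ext p
    by_cases hp : p.Prime
    · by_cases hpq : p = q
      · subst hpq
        have hpow (k : ℕ) : g (p ^ k) = if k = 0 then 1 else 0 := by
          rcases k with _ | k
          · simpa using hg₁
          · simp [g, Nat.coprime_pow_left_iff k.succ_pos, hp.ne_one]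
        simp [hp, hpow]
      · have hcop (k : ℕ) : (p ^ k).Coprime q := ((Nat.coprime_primes hp hq).mpr hpq).pow_left k
        rw [Set.mulIndicator_of_mem (show p ∈ {p | p.Prime} from hp),
          Set.mulIndicator_of_mem (show p ∈ {p | p.Prime ∧ p ≠ q} from ⟨hp, hpq⟩)]
        exact tsum_congr fun k => if_pos (hcop k)
    · simp [hp]
  have := EulerProduct.eulerProduct_hasProd_mulIndicator hg₁ hgmul hgsum hg₀
  rw [hfactor, ← hasProd_subtype_iff_mulIndicator] at this
  exact this

lemma tsum_eq_tsum_prime_pow_mul_coprime {α : Type*} [AddCommMonoid α] [TopologicalSpace α]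
    {q : ℕ} (hq : q.Prime) {h : ℕ → α} (h₀ : h 0 = 0) :
    ∑' m, h m = ∑' x : ℕ × {u : ℕ // u.Coprime q}, h (q ^ x.1 * x.2) := by
  have := Fact.mk hq
  have hval (k : ℕ) {u : ℕ} (hu : u.Coprime q) : padicValNat q (q ^ k * u) = k := by
    have hu0 : u ≠ 0 := by rintro rfl; exact hq.ne_one ((Nat.coprime_zero_left q).mp hu)
    rw [padicValNat.mul (pow_ne_zero k hq.ne_zero) hu0, padicValNat.prime_pow,
      padicValNat.eq_zero_of_not_dvd ((Nat.Prime.coprime_iff_not_dvd hq).mp hu.symm), add_zero]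
  refine (Function.Injective.tsum_eq (f := h)
    (g := fun x : ℕ × {u : ℕ // u.Coprime q} => q ^ x.1 * x.2) ?_ ?_).symm
  · rintro ⟨k, u, hu⟩ ⟨l, w, hw⟩ (hkl : q ^ k * u = q ^ l * w)
    obtain rfl : k = l := by rw [← hval k hu, hkl, hval l hw]
    obtain rfl : u = w := Nat.eq_of_mul_eq_mul_left (pow_pos hq.pos k) hkl
    rfl
  · intro m hm
    have hm0 : m ≠ 0 := by rintro rfl; exact hm h₀
    exact ⟨⟨m.factorization q, m / q ^ m.factorization q, (Nat.coprime_ordCompl hq hm0).symm⟩,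
      Nat.ordProj_mul_ordCompl_eq_self m q⟩

lemma norm_term_C_prime_pow_le {N : ℤ} (hN : N ≠ 0) (s : ℂ) {p : ℕ} (hp : p.Prime) (k : ℕ) :
    ‖term (fun m => (C m N : ℂ)) s (p ^ k)‖ ≤ 8 * N.natAbs * ((p : ℝ) ^ (-s.re)) ^ k := by
  rw [norm_term_eq, if_neg (pow_ne_zero k hp.ne_zero), Complex.norm_natCast,
    Real.rpow_pow_comm (Nat.cast_nonneg p), Real.rpow_neg (by positivity), ← div_eq_mul_inv,
    Nat.cast_pow]
  gcongr
  exact_mod_cast C_prime_pow_le hp k hN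

lemma summable_norm_term_C {N : ℤ} (hN : N ≠ 0) {s : ℂ} (hs : 1 < s.re) :
    Summable (‖term (fun m => (C m N : ℂ)) s ·‖) := by
  set K : ℝ := 8 * N.natAbs
  set f : ℕ → ℂ := fun m => C m N
  have hr {p : ℕ} (hp : p.Prime) : (p : ℝ) ^ (-s.re) ≤ 1 / 2 := by
    have h2 : (2 : ℝ) ≤ p := by exact_mod_cast hp.two_le
    calc (p : ℝ) ^ (-s.re) ≤ (p : ℝ) ^ (-1 : ℝ) :=
          Real.rpow_le_rpow_of_exponent_le (by linarith) (by linarith)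
      _ ≤ 1 / 2 := by rw [Real.rpow_neg_one, one_div]; exact inv_anti₀ two_pos h2
  have hgeom {p : ℕ} (hp : p.Prime) : Summable fun k => K * ((p : ℝ) ^ (-s.re)) ^ k :=
    (summable_geometric_of_lt_one (by positivity) ((hr hp).trans_lt (by norm_num))).mul_left K
  refine summable_of_multiplicative_of_tsum_prime_pow_le (fun _ => norm_nonneg _) (by simp)
    (by simp [f, C_one])
    (fun h => by simp only [term_mul_of_coprime (f := f) (cast_C_mul · N) s h, norm_mul])
    (fun hp => (hgeom hp).of_nonneg_of_le (fun _ => norm_nonneg _)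
      (norm_term_C_prime_pow_le hN s hp))
    (R := fun p => 2 * K * (p : ℝ) ^ (-s.re)) (fun p => by positivity)
    ((Real.summable_nat_rpow.mpr (by linarith)).mul_left _) fun {p} hp => ?_
  set r := (p : ℝ) ^ (-s.re)
  have hr0 : 0 ≤ r := by positivity
  calc ∑' k, ‖term f s (p ^ (k + 1))‖ ≤ ∑' k, K * r * r ^ k := by
        refine Summable.tsum_le_tsum (fun k => ?_) ?_ ((hgeom hp).mul_left r |>.congr ?_)
        · exact (norm_term_C_prime_pow_le hN s hp (k + 1)).trans_eq (by ring)
        · exact ((hgeom hp).comp_injective (add_left_injective 1)).of_nonneg_of_le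
            (fun _ => norm_nonneg _) fun k => norm_term_C_prime_pow_le hN s hp (k + 1)
        · intro k; ring
    _ = K * r * (1 - r)⁻¹ := by
        rw [tsum_mul_left, tsum_geometric_of_lt_one hr0 (by linarith [hr hp])]
    _ ≤ K * r * 2 := by
        gcongr
        rw [inv_le_comm₀ (by linarith [hr hp]) two_pos]
        linarith [hr hp]
    _ = 2 * K * r := by ring

lemma tsum_term_comp_mul_eq {f : ℕ → ℂ} (hmul : ∀ {a b : ℕ}, a.Coprime b → f (a * b) = f a * f b)
    {q : ℕ} (hq : q.Prime) {s : ℂ} (hf : Summable (‖term f s ·‖)) :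
    ∑' m, term (fun m => f (q * m)) s m =
      (∑' k, term (fun m => f (q * m)) s (q ^ k)) *
        ∑' m, if m.Coprime q then term f s m else 0 := by
  set g : ℕ → ℂ := fun m => f (q * m)
  have hg := summable_norm_term_comp_mul hf hq.ne_zero
  have hsplit (k : ℕ) {u : ℕ} (hu : u.Coprime q) :
      term g s (q ^ k * u) = term g s (q ^ k) * term f s u := by
    rw [term_comp_mul f hq.ne_zero, term_comp_mul f hq.ne_zero, ← mul_assoc,
      term_mul_of_coprime hmul s (by rw [← pow_succ']; exact hu.symm.pow_left _), mul_assoc]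
  rw [tsum_eq_tsum_prime_pow_mul_coprime hq (term_zero g s)]
  simp_rw [fun x : ℕ × {u : ℕ // u.Coprime q} => hsplit x.1 x.2.2]
  rw [← tsum_mul_tsum_of_summable_norm (hg.comp_injective (Nat.pow_right_injective hq.two_le))
    (hf.comp_injective Subtype.val_injective)]
  congr 1
  exact (_root_.tsum_subtype {u : ℕ | u.Coprime q} (term f s)).trans
    (tsum_congr fun m => by simp [Set.indicator_apply])

theorem stmt_8 (n : ℕ) (hn : 0 < n) (s : ℂ) (hs : 1 < s.re) :
    (Summable fun m : ℕ =>
      ‖(C (3 * (m + 1)) (-(n : ℤ)) : ℂ) / ((m + 1 : ℕ) : ℂ) ^ s‖) ∧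
    Multipliable (fun p : {p : ℕ // p.Prime ∧ p ≠ 3} =>
      ∑' k : ℕ, (C ((p : ℕ) ^ k) (-(n : ℤ)) : ℂ) / ((p : ℕ) : ℂ) ^ ((k : ℂ) * s)) ∧
    (∑' m : ℕ, (C (3 * (m + 1)) (-(n : ℤ)) : ℂ) / ((m + 1 : ℕ) : ℂ) ^ s) =
      (∑' k : ℕ, (C (3 ^ (k + 1)) (-(n : ℤ)) : ℂ) / (3 : ℂ) ^ ((k : ℂ) * s)) *
        ∏' p : {p : ℕ // p.Prime ∧ p ≠ 3},
          ∑' k : ℕ, (C ((p : ℕ) ^ k) (-(n : ℤ)) : ℂ) / ((p : ℕ) : ℂ) ^ ((k : ℂ) * s) := by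
  set f : ℕ → ℂ := fun m => C m (-(n : ℤ))
  set g : ℕ → ℂ := fun m => f (3 * m)
  have hmul {a b : ℕ} (h : a.Coprime b) : f (a * b) = f a * f b := cast_C_mul h _
  have hf := summable_norm_term_C (N := -(n : ℤ)) (by omega) hs
  have hshift (m : ℕ) :
      (C (3 * (m + 1)) (-(n : ℤ)) : ℂ) / ((m + 1 : ℕ) : ℂ) ^ s = term g s (m + 1) :=
    (term_of_ne_zero m.succ_ne_zero g s).symm
  have hfactor {p : ℕ} (hp : p ≠ 0) (k : ℕ) :
      (C (p ^ k) (-(n : ℤ)) : ℂ) / (p : ℂ) ^ ((k : ℂ) * s) = term f s (p ^ k) := by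
    rw [term_of_ne_zero (pow_ne_zero k hp), Complex.natCast_cpow_natCast_mul, Nat.cast_pow]
  have hthree (k : ℕ) :
      (C (3 ^ (k + 1)) (-(n : ℤ)) : ℂ) / (3 : ℂ) ^ ((k : ℂ) * s) = term g s (3 ^ k) := by
    rw [term_of_ne_zero (pow_ne_zero k three_ne_zero), Nat.cast_pow,
      ← Complex.natCast_cpow_natCast_mul]
    simp [g, f, pow_succ']
  have heuler := eulerProduct_hasProd_primes_ne (by simp [f, C_one])
    (term_mul_of_coprime hmul s) hf (term_zero f s) Nat.prime_three
  simp_rw [hshift, hthree, fun p : {p : ℕ // p.Prime ∧ p ≠ 3} => hfactor p.2.1.ne_zero]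
  refine ⟨(summable_nat_add_iff 1).mpr (summable_norm_term_comp_mul hf three_ne_zero),
    heuler.multipliable, ?_⟩
  rw [heuler.tprod_eq, ← tsum_term_comp_mul_eq hmul Nat.prime_three hf]
  have := (summable_norm_term_comp_mul hf three_ne_zero).of_norm.tsum_eq_zero_add
  rw [term_zero, zero_add] at this
  exact this.symm
end

section
/- Let n = 3^r · n₀ with r an odd positive integer and n₀ a positive integer not divisible by 3, and let s be a real number with s > 1/2. Then Σ_{k=0}^∞ C(3^{k+1}, −n) · 3^{−ks} = 1 + (3^{1−s} + 3^{1−2s}) · ((1 − 3^{(1−2s)(r−1)/2}) / (1 − 3^{1−2s})). In particular, if r = 1 this sum equals 1. -/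
namespace Nat.Prime

theorem pow_dvd_sq_iff_s14 {p : ℕ} (hp : p.Prime) (m v : ℕ) :
    p ^ m ∣ v ^ 2 ↔ p ^ ((m + 1) / 2) ∣ v := by
  rcases eq_or_ne v 0 with rfl | hv
  · simp
  · rw [hp.pow_dvd_iff_le_factorization (pow_ne_zero 2 hv),
      hp.pow_dvd_iff_le_factorization hv, Nat.factorization_pow]
    simp only [Finsupp.smul_apply, smul_eq_mul]
    omega

theorem not_pow_succ_dvd_sq_add {p r n : ℕ} (hp : p.Prime) (hr : Odd r) (hn : ¬ p ∣ n)
    (v : ℕ) :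
    ¬ p ^ (r + 1) ∣ v ^ 2 + p ^ r * n := by
  intro h
  have hr_sq : p ^ r ∣ v ^ 2 :=
    (Nat.dvd_add_left (dvd_mul_right _ _)).mp ((pow_dvd_pow p r.le_succ).trans h)
  have hr_succ_sq : p ^ (r + 1) ∣ v ^ 2 := by
    obtain ⟨t, rfl⟩ := hr
    rw [hp.pow_dvd_sq_iff_s14] at hr_sq ⊢
    simpa [show (2 * t + 1 + 1 + 1) / 2 = (2 * t + 1 + 1) / 2 by omega] using hr_sq
  rw [Nat.dvd_add_right hr_succ_sq, pow_succ] at h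
  exact hn (Nat.dvd_of_mul_dvd_mul_left (pow_pos hp.pos r) h)

theorem card_sq_eq_zero {p : ℕ} (hp : p.Prime) (m : ℕ) :
    Nat.card {x : ZMod (p ^ m) // x ^ 2 = 0} = p ^ (m / 2) := by
  have : NeZero (p ^ m) := ⟨pow_ne_zero m hp.ne_zero⟩
  have hc : (m + 1) / 2 ≤ m := by omega
  let f := (ZMod.castHom (pow_dvd_pow p hc) (ZMod (p ^ ((m + 1) / 2)))).toAddMonoidHom
  have hker : ∀ x : ZMod (p ^ m), x ^ 2 = 0 ↔ x ∈ f.ker := by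
    intro x
    calc x ^ 2 = 0
        ↔ ((x.val ^ 2 : ℕ) : ZMod (p ^ m)) = 0 := by rw [Nat.cast_pow, ZMod.natCast_zmod_val]
      _ ↔ ((x.val : ℕ) : ZMod (p ^ ((m + 1) / 2))) = 0 := by
        rw [ZMod.natCast_eq_zero_iff, ZMod.natCast_eq_zero_iff, hp.pow_dvd_sq_iff_s14]
      _ ↔ x ∈ f.ker := by
        change _ ↔ (x.cast : ZMod (p ^ ((m + 1) / 2))) = 0
        rw [ZMod.cast_eq_val]
  have hcard := f.ker.card_mul_index
  rw [AddSubgroup.index_ker,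
    AddMonoidHom.range_eq_top.mpr (ZMod.castHom_surjective (pow_dvd_pow p hc)),
    AddSubgroup.card_top, Nat.card_zmod, Nat.card_zmod] at hcard
  have hm : p ^ m = p ^ (m / 2) * p ^ ((m + 1) / 2) := by
    rw [← pow_add]; congr 1; omega
  rw [Nat.card_congr (Equiv.subtypeEquivRight hker)]
  exact Nat.eq_of_mul_eq_mul_right (pow_pos hp.pos _) (hcard.trans hm)

end Nat.Prime

open Finset

theorem C_prime_pow_of_dvd {p : ℕ} (hp : p.Prime) {m : ℕ} {n : ℤ} (h : (p : ℤ) ^ m ∣ n) :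
    C (p ^ m) n = p ^ (m / 2) := by
  rw [C, (ZMod.intCast_zmod_eq_zero_iff_dvd n (p ^ m)).mpr (by exact_mod_cast h)]
  exact hp.card_sq_eq_zero m

theorem C_prime_pow_neg_eq_zero {p r n m : ℕ} (hp : p.Prime) (hr : Odd r) (hn : ¬ p ∣ n)
    (hm : r < m) : C (p ^ m) (-((p : ℤ) ^ r * n)) = 0 := by
  have : NeZero (p ^ m) := ⟨pow_ne_zero m hp.ne_zero⟩
  have : IsEmpty {x : ZMod (p ^ m) // x ^ 2 = ((-((p : ℤ) ^ r * n) : ℤ) : ZMod (p ^ m))} := by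
    refine ⟨fun ⟨x, hx⟩ => hp.not_pow_succ_dvd_sq_add hr hn x.val ?_⟩
    have : p ^ m ∣ x.val ^ 2 + p ^ r * n := by
      rw [← ZMod.natCast_eq_zero_iff]
      push_cast at hx ⊢
      rw [ZMod.natCast_zmod_val, hx]
      ring
    exact (pow_dvd_pow p hm).trans this
  exact Nat.card_of_isEmpty

theorem Finset.sum_range_two_mul_add_one {M : Type*} [AddCommMonoid M] (f : ℕ → M) (t : ℕ) :
    ∑ k ∈ range (2 * t + 1), f k =
      f 0 + ∑ j ∈ range t, (f (2 * j + 1) + f (2 * j + 2)) := by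
  induction t with
  | zero => simp
  | succ t ih =>
    rw [show 2 * (t + 1) + 1 = 2 * t + 1 + 1 + 1 by ring, sum_range_succ, sum_range_succ, ih,
      sum_range_succ, add_assoc, add_assoc]

theorem sum_range_pow_half_mul_rpow {b : ℝ} (hb : 0 < b) (s : ℝ) (t : ℕ) :
    ∑ k ∈ range (2 * t + 1), b ^ ((k + 1) / 2) * b ^ (-(k : ℝ) * s) =
      1 + (b ^ (1 - s) + b ^ (1 - 2 * s)) * ∑ j ∈ range t, (b ^ (1 - 2 * s)) ^ j := by
  rw [sum_range_two_mul_add_one, mul_sum]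
  congr 1
  · simp
  refine sum_congr rfl fun j _ => ?_
  rw [show (2 * j + 1 + 1) / 2 = j + 1 by omega, show (2 * j + 2 + 1) / 2 = j + 1 by omega]
  simp only [← Real.rpow_natCast, ← Real.rpow_mul hb.le, ← Real.rpow_add hb, add_mul]
  push_cast
  ring_nf

theorem tsum_C_neg_prime_pow_mul_rpow {p t n : ℕ} (hp : p.Prime) (hn : ¬ p ∣ n) (s : ℝ) :
    ∑' k : ℕ, (C (p ^ (k + 1)) (-((p : ℤ) ^ (2 * t + 1) * n)) : ℝ) *
        (p : ℝ) ^ (-(k : ℝ) * s) =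
      1 + ((p : ℝ) ^ (1 - s) + (p : ℝ) ^ (1 - 2 * s)) *
        ∑ j ∈ range t, ((p : ℝ) ^ (1 - 2 * s)) ^ j := by
  rw [← sum_range_pow_half_mul_rpow (by exact_mod_cast hp.pos),
    tsum_eq_sum (s := range (2 * t + 1))]
  · refine sum_congr rfl fun k hk => ?_
    have hk : k + 1 ≤ 2 * t + 1 := by rw [mem_range] at hk; omega
    rw [C_prime_pow_of_dvd hp (dvd_neg.mpr ((pow_dvd_pow _ hk).mul_right _))]
    push_cast
    rfl
  · intro k hk
    rw [C_prime_pow_neg_eq_zero hp ⟨t, rfl⟩ hn (by rw [mem_range] at hk; omega)]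
    simp

theorem stmt_14_general (r : ℕ) (hr : Odd r) (n₀ : ℕ)
    (h3n₀ : ¬ 3 ∣ n₀) (s : ℝ) (hs : 1 / 2 < s) :
    (∑' k : ℕ, (C (3 ^ (k + 1)) (-((3 : ℤ) ^ r * n₀)) : ℝ) * (3 : ℝ) ^ (-(k : ℝ) * s) =
      1 + ((3 : ℝ) ^ (1 - s) + (3 : ℝ) ^ (1 - 2 * s)) *
        ((1 - (3 : ℝ) ^ ((1 - 2 * s) * ((r : ℝ) - 1) / 2)) / (1 - (3 : ℝ) ^ (1 - 2 * s)))) ∧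
    (r = 1 →
      ∑' k : ℕ, (C (3 ^ (k + 1)) (-((3 : ℤ) ^ r * n₀)) : ℝ) * (3 : ℝ) ^ (-(k : ℝ) * s) = 1) := by
  obtain ⟨t, rfl⟩ := hr
  have hq : (3 : ℝ) ^ (1 - 2 * s) ≠ 1 :=
    (Real.rpow_lt_one_of_one_lt_of_neg (by norm_num) (by linarith)).ne
  have hsum := tsum_C_neg_prime_pow_mul_rpow (t := t) Nat.prime_three h3n₀ s
  push_cast at hsum
  have hexp : (1 - 2 * s) * (((2 * t + 1 : ℕ) : ℝ) - 1) / 2 = (1 - 2 * s) * t := by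
    push_cast; ring
  rw [hsum, hexp, Real.rpow_mul (by norm_num), Real.rpow_natCast, geom_sum_eq hq,
    ← neg_div_neg_eq, neg_sub, neg_sub]
  refine ⟨rfl, fun ht => ?_⟩
  obtain rfl : t = 0 := by omega
  simp

theorem stmt_14 (r : ℕ) (hr : Odd r) (hrpos : 0 < r) (n₀ : ℕ) (hn₀ : 0 < n₀)
    (h3n₀ : ¬ 3 ∣ n₀) (s : ℝ) (hs : 1 / 2 < s) :
    (∑' k : ℕ, (C (3 ^ (k + 1)) (-((3 : ℤ) ^ r * n₀)) : ℝ) * (3 : ℝ) ^ (-(k : ℝ) * s) =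
      1 + ((3 : ℝ) ^ (1 - s) + (3 : ℝ) ^ (1 - 2 * s)) *
        ((1 - (3 : ℝ) ^ ((1 - 2 * s) * ((r : ℝ) - 1) / 2)) / (1 - (3 : ℝ) ^ (1 - 2 * s)))) ∧
    (r = 1 →
      ∑' k : ℕ, (C (3 ^ (k + 1)) (-((3 : ℤ) ^ r * n₀)) : ℝ) * (3 : ℝ) ^ (-(k : ℝ) * s) = 1) :=
  stmt_14_general r hr n₀ h3n₀ s hs
end

section
/- Let ψ be a primitive Dirichlet character modulo n (with complex values), let b be a positive integer, and let w be a complex number with Re(w) > 1. Define L_b(w, ψ) = Σ_{d ≥ 1, d squarefree, gcd(d, b) = 1} ψ(d) · d^{−w} and L(w, ψ) = Σ_{d ≥ 1} ψ(d) · d^{−w}. Then L_b(w, ψ) = (L(w, ψ) / L(2w, ψ²)) · ∏_{p prime, p ∣ b} (1 + ψ(p) · p^{−w})^{−1}, where ψ² denotes the square of the character ψ. -/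
/-! For `x = ψ(p) p^(-w)`, the series over squarefree `d` coprime to `b` has Euler factor `1 + x`
at `p ∤ b` and `1` at `p ∣ b`, so after multiplying by the finite product over `p ∣ b` every
factor is `1 + x`. Since `(1 - x ^ 2)⁻¹ (1 + x) = (1 - x)⁻¹`, multiplying further by the Euler
product of `L(2w, ψ²)` yields that of `L(w, ψ)`. -/

open Nat

namespace EulerProduct

section CommRing

variable {R : Type*} [NormedCommRing R] (f : ℕ →*₀ R) (b : ℕ)

lemma ite_squarefree_coprime_mul {m k : ℕ} (hmk : m.Coprime k) :
    (if Squarefree (m * k) ∧ (m * k).Coprime b then f (m * k) else 0) =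
      (if Squarefree m ∧ m.Coprime b then f m else 0) *
        (if Squarefree k ∧ k.Coprime b then f k else 0) := by
  simp only [ite_zero_mul_ite_zero, Nat.squarefree_mul hmk, Nat.coprime_mul_iff_left, map_mul,
    and_and_and_comm]

lemma tsum_ite_squarefree_coprime_prime_pow {p : ℕ} (hp : p.Prime) :
    ∑' e, (if Squarefree (p ^ e) ∧ (p ^ e).Coprime b then f (p ^ e) else 0) =
      if p ∣ b then 1 else 1 + f p := by
  have hvanish : ∀ e ∉ ({0, 1} : Finset ℕ),
      (if Squarefree (p ^ e) ∧ (p ^ e).Coprime b then f (p ^ e) else 0) = 0 := by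
    intro e he
    obtain ⟨he0, he1⟩ : e ≠ 0 ∧ e ≠ 1 := by simpa using he
    rw [if_neg fun h => he1 ((Nat.squarefree_pow_iff hp.ne_one he0).mp h.1).2]
  rw [tsum_eq_sum hvanish, Finset.sum_pair zero_ne_one]
  by_cases hpb : p ∣ b <;> simp [hpb, hp.squarefree, hp.coprime_iff_not_dvd]

theorem hasProd_ite_squarefree_coprime [CompleteSpace R] (hsum : Summable (‖f ·‖)) :
    HasProd (fun p : Primes => if (p : ℕ) ∣ b then 1 else 1 + f p)
      (∑' d, if Squarefree d ∧ d.Coprime b then f d else 0) := by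
  have hsum' : Summable fun d => ‖if Squarefree d ∧ d.Coprime b then f d else 0‖ :=
    hsum.of_nonneg_of_le (fun _ => norm_nonneg _) fun d => by split_ifs <;> simp
  convert eulerProduct_hasProd (by simp) (ite_squarefree_coprime_mul f b) hsum' (by simp)
    using 2 with p
  exact (tsum_ite_squarefree_coprime_prime_pow f b p.prop).symm

end CommRing

theorem hasProd_ite_dvd_prod_primeFactors {M : Type*} [CommMonoid M] [TopologicalSpace M]
    (g : ℕ → M) {b : ℕ} (hb : b ≠ 0) :
    HasProd (fun p : Primes => if (p : ℕ) ∣ b then g p else 1)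
      (∏ p ∈ b.primeFactors, g p) := by
  have hprod : ∏ p ∈ b.primeFactors, g p =
      ∏ p ∈ (b.primeFactors.subtype Nat.Prime : Finset Primes),
        if (p : ℕ) ∣ b then g p else 1 := by
    rw [Finset.prod_subtype_eq_prod_filter (f := fun p => if p ∣ b then g p else 1),
      Finset.filter_true_of_mem fun p hp => prime_of_mem_primeFactors hp]
    exact Finset.prod_congr rfl fun p hp => (if_pos (dvd_of_mem_primeFactors hp)).symm
  rw [hprod]
  refine hasProd_prod_of_ne_finset_one fun p hp => if_neg fun hpb => hp ?_
  exact Finset.mem_subtype.mpr (mem_primeFactors.mpr ⟨p.prop, hpb, hb⟩)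

section Field

variable {F : Type*} [NormedField F] [CompleteSpace F] {f g : ℕ →*₀ F}

lemma norm_apply_prime_lt_one (hsum : Summable (‖f ·‖)) {p : ℕ} (hp : p.Prime) :
    ‖f p‖ < 1 := by
  refine summable_geometric_iff_norm_lt_one.mp (Summable.of_norm ?_)
  simpa only [Function.comp_def, map_pow]
    using hsum.comp_injective (Nat.pow_right_injective hp.one_lt)

lemma one_add_apply_prime_ne_zero (hsum : Summable (‖f ·‖)) {p : ℕ} (hp : p.Prime) :
    1 + f p ≠ 0 := by
  intro h
  have := norm_apply_prime_lt_one hsum hp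
  rw [eq_neg_of_add_eq_zero_right h, norm_neg, norm_one] at this
  exact this.false

theorem tsum_mul_tsum_squarefree_coprime_mul_prod (hf : Summable (‖f ·‖))
    (hg : Summable (‖g ·‖)) (hgf : ∀ p, p.Prime → g p = f p ^ 2) {b : ℕ} (hb : b ≠ 0) :
    (∑' n, g n) * ((∑' d, if Squarefree d ∧ d.Coprime b then f d else 0) *
      ∏ p ∈ b.primeFactors, (1 + f p)) = ∑' n, f n := by
  refine ((eulerProduct_completely_multiplicative_hasProd hg).mul
    ((hasProd_ite_squarefree_coprime f b hf).mul
      (hasProd_ite_dvd_prod_primeFactors (fun p => 1 + f p) hb))).unique ?_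
  convert eulerProduct_completely_multiplicative_hasProd hf using 2 with p
  have hlocal :
      ((if (p : ℕ) ∣ b then 1 else 1 + f p) * if (p : ℕ) ∣ b then 1 + f p else 1) = 1 + f p := by
    split_ifs <;> simp
  rw [hlocal, hgf p p.prop, show (1 : F) - f p ^ 2 = (1 - f p) * (1 + f p) by ring, mul_inv,
    inv_mul_cancel_right₀ (one_add_apply_prime_ne_zero hf p.prop)]

end Field

end EulerProduct

section Dirichlet

variable {n : ℕ} (χ : DirichletCharacter ℂ n) {s : ℂ}

lemma LSeries_ite_eq_tsum_dirichletSummandHom (hs : s ≠ 0) (P : ℕ → Prop) [DecidablePred P] :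
    LSeries (fun d => if P d then χ d else 0) s =
      ∑' d, if P d then dirichletSummandHom χ hs d else 0 := by
  simp only [LSeries, LSeries.term_of_ne_zero' hs, dirichletSummandHom, MonoidWithZeroHom.coe_mk,
    ZeroHom.coe_mk, Complex.cpow_neg, div_eq_mul_inv, ite_mul, zero_mul]

lemma dirichletSummandHom_sq_apply (hs : s ≠ 0) (d : ℕ) :
    dirichletSummandHom (χ ^ 2) (mul_ne_zero two_ne_zero hs) d =
      dirichletSummandHom χ hs d ^ 2 := by
  have hexp : -(2 * s) = ((2 : ℕ) : ℂ) * -s := by push_cast; ring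
  simp only [dirichletSummandHom, MonoidWithZeroHom.coe_mk, ZeroHom.coe_mk, pow_two,
    MulChar.mul_apply, hexp, Complex.cpow_nat_mul]
  ring

end Dirichlet

theorem stmt_18_general (n : ℕ) (ψ : DirichletCharacter ℂ n)
    (b : ℕ) (hb : 0 < b) (w : ℂ) (hw : 1 < w.re) :
    LSeries (fun d : ℕ => if Squarefree d ∧ Nat.Coprime d b then ψ (d : ZMod n) else 0) w =
      LSeries (fun d : ℕ => ψ (d : ZMod n)) w /
        LSeries (fun d : ℕ => (ψ ^ 2) (d : ZMod n)) (2 * w) *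
      ∏ p ∈ b.primeFactors, (1 + ψ (p : ZMod n) * (p : ℂ) ^ (-w))⁻¹ := by
  have hw2 : 1 < (2 * w).re := by linarith [show (2 * w).re = 2 * w.re by simp]
  have hsum := summable_dirichletSummand ψ hw
  have key := EulerProduct.tsum_mul_tsum_squarefree_coprime_mul_prod hsum
    (summable_dirichletSummand (ψ ^ 2) hw2) (fun p _ => dirichletSummandHom_sq_apply ψ _ p)
    hb.ne'
  have hP := Finset.prod_ne_zero_iff.mpr fun p hp =>
    EulerProduct.one_add_apply_prime_ne_zero hsum (prime_of_mem_primeFactors (n := b) hp)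
  rw [tsum_dirichletSummand ψ hw, tsum_dirichletSummand (ψ ^ 2) hw2,
    ← LSeries_ite_eq_tsum_dirichletSummandHom] at key
  simp only [dirichletSummandHom, MonoidWithZeroHom.coe_mk, ZeroHom.coe_mk] at key hP
  rw [Finset.prod_inv_distrib, ← key]
  field_simp [DirichletCharacter.LSeries_ne_zero_of_one_lt_re (ψ ^ 2) hw2]

theorem stmt_18 (n : ℕ) (ψ : DirichletCharacter ℂ n) (hψ : ψ.conductor = n)
    (b : ℕ) (hb : 0 < b) (w : ℂ) (hw : 1 < w.re) :
    LSeries (fun d : ℕ => if Squarefree d ∧ Nat.Coprime d b then ψ (d : ZMod n) else 0) w =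
      LSeries (fun d : ℕ => ψ (d : ZMod n)) w /
        LSeries (fun d : ℕ => (ψ ^ 2) (d : ZMod n)) (2 * w) *
      ∏ p ∈ b.primeFactors, (1 + ψ (p : ZMod n) * (p : ℂ) ^ (-w))⁻¹ :=
  stmt_18_general n ψ b hb w hw
end
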